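/- Let r ≥ 2, and let E be an evolution algebra over F of type [1, …, 1, n, 1, …, 1] (l ones, then n, then r ones) with natural basis {h_1, …, h_{l+n+r}} whose multiplication satisfies: h_i² = Σ_{j=i+1}^{l+n+r} α_{i,j} h_j for i = 1, …, l; h_{l+1}² = c h_{l+n+r} with c ≠ 0; h_{l+t}² = Σ_{j=l+n+1}^{l+n+r} α_{l+t,j} h_j for t = 2, …, n; h_{l+n+m}² = Σ_{j=l+n+m+1}^{l+n+r} α_{l+n+m,j} h_j for m = 1, …, r−1; and h_{l+n+r}² = 0. Then E is not isomorphic to E_{lr}(U, b, u) for any n-dimensional F-vector space U, nondegenerate symmetric bilinear form b on U, and nonzero u ∈ U. -/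

import Mathlib

variable {F : Type*} [Field F] {A : Type*} [AddCommGroup A] [Module F A]

/-- For a bilinear multiplication `mul` on `A` and a submodule `S`, the preimage in `A` of the
annihilator of `A/S`, i.e. `{x | x·A ⊆ S and A·x ⊆ S}`. -/
def annSucc (mul : A →ₗ[F] A →ₗ[F] A) (S : Submodule F A) : Submodule F A where
  carrier := {x | ∀ y : A, mul x y ∈ S ∧ mul y x ∈ S}
  zero_mem' := by intro y; simp
  add_mem' := by
    intro a b ha hb y
    refine ⟨?_, ?_⟩
    · simpa [map_add, LinearMap.add_apply] using S.add_mem (ha y).1 (hb y).1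
    · simpa [map_add, LinearMap.add_apply] using S.add_mem (ha y).2 (hb y).2
  smul_mem' := by
    intro c a ha y
    refine ⟨?_, ?_⟩
    · simpa [map_smul, LinearMap.smul_apply] using S.smul_mem c (ha y).1
    · simpa [map_smul, LinearMap.smul_apply] using S.smul_mem c (ha y).2

/-- The upper annihilating series: `annSeq mul 0 = 0`, and
`annSeq mul (i+1)` is the preimage in `A` of `ann(A / annSeq mul i)`. -/
def annSeq (mul : A →ₗ[F] A →ₗ[F] A) : ℕ → Submodule F A
  | 0 => ⊥
  | i + 1 => annSucc mul (annSeq mul i)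

/-- A basis is natural if the product of distinct basis vectors vanishes. -/
def IsNaturalBasis {ι : Type*} (mul : A →ₗ[F] A →ₗ[F] A) (e : Module.Basis ι F A) : Prop :=
  ∀ i j, i ≠ j → mul (e i) (e j) = 0

/-- An evolution algebra: a commutative algebra admitting a natural basis. -/
def IsEvolutionAlgebra (mul : A →ₗ[F] A →ₗ[F] A) : Prop :=
  (∀ x y, mul x y = mul y x) ∧ ∃ (n : ℕ) (e : Module.Basis (Fin n) F A), IsNaturalBasis mul e

/-- The (nilpotent) algebra `(A, mul)` has type `[n_1, …, n_r]`:  `r` is the least index with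
`ann^r(A) = A` and `n_i = dim ann^i(A) - dim ann^{i-1}(A)`. -/
def HasType (mul : A →ₗ[F] A →ₗ[F] A) (L : List ℕ) : Prop :=
  annSeq mul L.length = ⊤ ∧ (∀ j < L.length, annSeq mul j ≠ ⊤) ∧
  ∀ (i : ℕ) (h : i < L.length),
    L.get ⟨i, h⟩ =
      Module.finrank F (annSeq mul (i + 1)) - Module.finrank F (annSeq mul i)

/-!
In `E_{lr}(U, b, u)` an element of `ann²` has vanishing `F^l`- and `U`-components (because
`u ≠ 0` and `b` is nondegenerate) and vanishing `F^r`-coordinates except the last two, so `ann²`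
has dimension at most `2`. In the evolution algebra, `h_{l+n+r}² = 0` and the squares of
`h_{l+1}` and `h_{l+n+r-1}` are multiples of `h_{l+n+r}`, so these three basis vectors lie in
`ann²`. An isomorphism maps `ann²` into `ann²`, which is impossible. (For `n = 0` the space `U`
is zero, contradicting `u ≠ 0`.)
-/

theorem map_mem_annSeq {B : Type*} [AddCommGroup B] [Module F B]
    {mulA : A →ₗ[F] A →ₗ[F] A} {mulB : B →ₗ[F] B →ₗ[F] B} (φ : A ≃ₗ[F] B)
    (hφ : ∀ x y, φ (mulA x y) = mulB (φ x) (φ y)) :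
    ∀ {m : ℕ} {x : A}, x ∈ annSeq mulA m → φ x ∈ annSeq mulB m
  | 0, x, hx => by
    rw [annSeq, Submodule.mem_bot] at hx ⊢
    rw [hx, map_zero]
  | _ + 1, _, hx => fun y =>
    ⟨by simpa [hφ] using map_mem_annSeq φ hφ (hx (φ.symm y)).1,
      by simpa [hφ] using map_mem_annSeq φ hφ (hx (φ.symm y)).2⟩

theorem Module.Basis.mem_span_singleton_of_repr_eq_zero {ι : Type*} (e : Module.Basis ι F A)
    {x : A} {i : ι} (hx : ∀ j ≠ i, e.repr x j = 0) : x ∈ F ∙ e i := by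
  rw [← Set.image_singleton, e.mem_span_image]
  intro j hj
  by_contra hji
  exact Finsupp.mem_support_iff.mp hj (hx j hji)

namespace IsNaturalBasis

variable {ι : Type*} {mul : A →ₗ[F] A →ₗ[F] A} {e : Module.Basis ι F A}

theorem mul_basis_left (he : IsNaturalBasis mul e) (i : ι) (y : A) :
    mul (e i) y = e.repr y i • mul (e i) (e i) := by
  classical
  have : mul (e i) = (e.coord i).smulRight (mul (e i) (e i)) := e.ext fun j => by
    obtain rfl | hji := eq_or_ne j i
    · simp
    · simp [he i j hji.symm, hji]
  simpa using LinearMap.congr_fun this y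

theorem mul_basis_right (he : IsNaturalBasis mul e) (i : ι) (y : A) :
    mul y (e i) = e.repr y i • mul (e i) (e i) := by
  classical
  have : mul.flip (e i) = (e.coord i).smulRight (mul (e i) (e i)) := e.ext fun j => by
    obtain rfl | hji := eq_or_ne j i
    · simp
    · simp [he j i hji, hji]
  simpa using LinearMap.congr_fun this y

theorem basis_mem_annSeq_succ (he : IsNaturalBasis mul e) {i : ι} {m : ℕ}
    (hi : mul (e i) (e i) ∈ annSeq mul m) : e i ∈ annSeq mul (m + 1) := fun y =>
  ⟨he.mul_basis_left i y ▸ Submodule.smul_mem _ _ hi,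
    he.mul_basis_right i y ▸ Submodule.smul_mem _ _ hi⟩

theorem basis_mem_annSeq_two (he : IsNaturalBasis mul e) {i k : ι}
    (hk : mul (e k) (e k) = 0) (hi : mul (e i) (e i) ∈ F ∙ e k) : e i ∈ annSeq mul 2 := by
  refine he.basis_mem_annSeq_succ ((Submodule.span_singleton_le_iff_mem _ _).mpr ?_ hi)
  exact he.basis_mem_annSeq_succ (hk ▸ Submodule.zero_mem _)

end IsNaturalBasis

/-- `E_{lr}(U, b, u)` with `l = a + 1` and `r = d + 1`. -/
abbrev ElrSpace (F : Type*) (a : ℕ) (U : Type*) (d : ℕ) :=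
  (Fin (a + 1) → F) × U × (Fin (d + 1) → F)

def IsElrMul {U : Type*} [AddCommGroup U] [Module F U] {a d : ℕ} (b : U →ₗ[F] U →ₗ[F] F)
    (u : U) (mul : ElrSpace F a U d →ₗ[F] ElrSpace F a U d →ₗ[F] ElrSpace F a U d) : Prop :=
  ∀ (α γ : Fin (a + 1) → F) (x y : U) (β δ : Fin (d + 1) → F),
    mul (α, x, β) (γ, y, δ) =
      (Fin.cases (motive := fun _ => F) 0 (fun j : Fin a => α j.castSucc * γ j.castSucc),
       (α (Fin.last a) * γ (Fin.last a)) • u,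
       Fin.cases (motive := fun _ => F) (b x y) (fun j : Fin d => β j.castSucc * δ j.castSucc))

theorem ElrSpace.finite_of_linearEquiv {U : Type*} [AddCommGroup U] [Module F U] {a d : ℕ}
    [Module.Finite F A] (φ : A ≃ₗ[F] ElrSpace F a U d) : Module.Finite F U :=
  .of_surjective (LinearMap.fst F U _ ∘ₗ LinearMap.snd F _ _ ∘ₗ φ.toLinearMap)
    fun x => ⟨φ.symm (0, x, 0), by simp⟩

namespace IsElrMul

variable {U : Type*} [AddCommGroup U] [Module F U] {a d : ℕ} {b : U →ₗ[F] U →ₗ[F] F}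
  {u : U} {mul : ElrSpace F a U d →ₗ[F] ElrSpace F a U d →ₗ[F] ElrSpace F a U d}

theorem fst_eq_zero_of_mul_self (hmul : IsElrMul b u mul) (hu : u ≠ 0) {p : ElrSpace F a U d}
    (h1 : (mul p p).1 = 0) (h2 : (mul p p).2.1 = 0) : p.1 = 0 := by
  obtain ⟨α, x, β⟩ := p
  rw [hmul] at h1 h2
  funext i
  induction i using Fin.lastCases with
  | last => simpa [hu] using h2
  | cast j => simpa using congrFun h1 j.succ

theorem coords_eq_zero_of_mem_annSeq (hmul : IsElrMul b u mul) (hu : u ≠ 0)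
    (hb : ∀ x, (∀ y, b x y = 0) → x = 0) :
    ∀ {k : ℕ}, k ≤ d + 1 → ∀ {p : ElrSpace F a U d}, p ∈ annSeq mul k →
      p.1 = 0 ∧ p.2.1 = 0 ∧ ∀ j : Fin (d + 1), (j : ℕ) + k ≤ d → p.2.2 j = 0
  | 0, _, p, hp => by
    rw [annSeq, Submodule.mem_bot] at hp
    simp [hp]
  | k + 1, hk, ⟨α, x, β⟩, hp => by
    have ih := fun {q} => coords_eq_zero_of_mem_annSeq hmul hu hb (k := k) (by omega) (p := q)
    obtain ⟨hsq1, hsq2, hsq3⟩ := ih (hp (α, x, β)).1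
    refine ⟨hmul.fst_eq_zero_of_mul_self hu hsq1 hsq2, hb x fun y => ?_, fun j hj => ?_⟩
    · have := (ih (hp (0, y, 0)).1).2.2 0 (by simp; omega)
      rw [hmul] at this
      simpa using this
    · obtain ⟨j, rfl⟩ : ∃ j' : Fin d, j = j'.castSucc := ⟨⟨j, by omega⟩, rfl⟩
      have := hsq3 j.succ (by simp at hj ⊢; omega)
      rw [hmul] at this
      simpa using this

theorem card_le_two_of_linearIndependent (hmul : IsElrMul b u mul) (hu : u ≠ 0)
    (hb : ∀ x, (∀ y, b x y = 0) → x = 0) (hd : 1 ≤ d) {ι : Type*} [Fintype ι]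
    {v : ι → ElrSpace F a U d} (hv : LinearIndependent F v)
    (hmem : ∀ i, v i ∈ annSeq mul 2) :
    Fintype.card ι ≤ 2 := by
  let ψ : ElrSpace F a U d →ₗ[F] F × F :=
    ((LinearMap.proj ⟨d - 1, by omega⟩).prod (LinearMap.proj (Fin.last d))) ∘ₗ
      LinearMap.snd F U _ ∘ₗ LinearMap.snd F _ _
  -- on `ann²` only the last two coordinates of `F^r` can be nonzero, and `ψ` reads them
  have hdisj : Disjoint (Submodule.span F (Set.range v)) (LinearMap.ker ψ) := by
    refine Submodule.disjoint_def.mpr fun p hp hψ => ?_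
    obtain ⟨h1, h2, h3⟩ := hmul.coords_eq_zero_of_mem_annSeq hu hb (by omega)
      (Submodule.span_le.mpr (Set.range_subset_iff.mpr hmem) hp)
    replace hψ : p.2.2 ⟨d - 1, by omega⟩ = 0 ∧ p.2.2 (Fin.last d) = 0 := by
      simpa [ψ, Function.prod] using hψ
    refine Prod.ext h1 (Prod.ext h2 (funext fun j => ?_))
    rcases lt_or_ge ((j : ℕ) + 2) (d + 1) with hj | hj
    · exact h3 j (by omega)
    rcases eq_or_ne (j : ℕ) d with hj' | hj'
    · exact (Fin.ext hj' : j = Fin.last d) ▸ hψ.2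
    · exact (Fin.ext (by simp; omega) : j = ⟨d - 1, by omega⟩) ▸ hψ.1
  simpa using (hv.map hdisj).fintype_card_le_finrank

end IsElrMul

/-- (Here `l = a + 1`, `r = d + 1 ≥ 2`, indices 0-based.) An evolution algebra
of type `[1,…,1,n,1,…,1]` with natural basis `h_1,…,h_{l+n+r}` whose multiplication satisfies
`h_i² ∈ span{h_{i+1},…}` for `i ≤ l`, `h_{l+1}² = c h_{l+n+r}` with `c ≠ 0`,
`h_{l+t}² ∈ span{h_{l+n+1},…}` for `t = 2,…,n`, `h_{l+n+m}² ∈ span{h_{l+n+m+1},…}` for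
`m = 1,…,r-1`, and `h_{l+n+r}² = 0`, is not isomorphic to `E_{lr}(U, b, u)` for any
admissible `(U, b, u)`. -/
theorem concrete_r_ge_two_not_iso_Elr
    (F : Type*) [Field F]
    (a d n : ℕ) (hr : 1 ≤ d)  -- `r = d + 1 ≥ 2`
    {A : Type*} [AddCommGroup A] [Module F A]
    (mulA : A →ₗ[F] A →ₗ[F] A)
    (h : Module.Basis (Fin (a + 1 + n + (d + 1))) F A)
    (hnat : IsNaturalBasis mulA h)
    (c : F)
    (hs2 : mulA (h ⟨a + 1, by omega⟩) (h ⟨a + 1, by omega⟩) =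
      c • h ⟨a + 1 + n + d, by omega⟩)
    (hs4 : ∀ i : Fin (a + 1 + n + (d + 1)), a + 1 + n ≤ (i : ℕ) →
      (i : ℕ) + 2 ≤ a + 1 + n + (d + 1) →
      ∀ j : Fin (a + 1 + n + (d + 1)), (j : ℕ) ≤ (i : ℕ) →
        h.repr (mulA (h i) (h i)) j = 0)
    (hs5 : mulA (h ⟨a + 1 + n + d, by omega⟩) (h ⟨a + 1 + n + d, by omega⟩) = 0) :
    ∀ (U : Type*) (_ : AddCommGroup U) (_ : Module F U),
      Module.finrank F U = n →
      ∀ b : U →ₗ[F] U →ₗ[F] F, (∀ x y : U, b x y = b y x) →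
        (∀ x : U, (∀ y : U, b x y = 0) → x = 0) →
      ∀ u : U, u ≠ 0 →
      ∀ mul' : ((Fin (a + 1) → F) × U × (Fin (d + 1) → F)) →ₗ[F]
          ((Fin (a + 1) → F) × U × (Fin (d + 1) → F)) →ₗ[F]
          ((Fin (a + 1) → F) × U × (Fin (d + 1) → F)),
        (∀ (α γ : Fin (a + 1) → F) (x y : U) (β δ : Fin (d + 1) → F),
          mul' (α, x, β) (γ, y, δ) =
            (Fin.cases (motive := fun _ => F) 0
                (fun j : Fin a => α j.castSucc * γ j.castSucc),
             (α (Fin.last a) * γ (Fin.last a)) • u,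
             Fin.cases (motive := fun _ => F) (b x y)
                (fun j : Fin d => β j.castSucc * δ j.castSucc))) →
        ¬ ∃ φ : A ≃ₗ[F] ((Fin (a + 1) → F) × U × (Fin (d + 1) → F)),
            ∀ x y, φ (mulA x y) = mul' (φ x) (φ y) := by
  intro U _ _ hUn b _ hb u hu mul' hmul' ⟨φ, hφ⟩
  obtain rfl | hn := Nat.eq_zero_or_pos n
  · have : Module.Finite F A := .of_basis h
    have : Module.Finite F U := ElrSpace.finite_of_linearEquiv φ
    have : Subsingleton U := Module.finrank_zero_iff.mp hUn
    exact hu (Subsingleton.elim u 0)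
  set last : Fin (a + 1 + n + (d + 1)) := ⟨a + 1 + n + d, by omega⟩
  set prev : Fin (a + 1 + n + (d + 1)) := ⟨a + n + d, by omega⟩
  have hprev : mulA (h prev) (h prev) ∈ F ∙ h last :=
    h.mem_span_singleton_of_repr_eq_zero fun j hj =>
      hs4 prev (by simp [prev]; omega) (by simp [prev]; omega) j <| by
        have := j.isLt
        simp [prev, last, Fin.ext_iff] at hj ⊢
        omega
  -- `h_{l+1}`, `h_{l+n+r-1}`, `h_{l+n+r}` in the paper's 1-based numbering
  let idx : Fin 3 → Fin (a + 1 + n + (d + 1)) := ![⟨a + 1, by omega⟩, prev, last]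
  have hidx : Function.Injective idx := by
    intro k l
    fin_cases k <;> fin_cases l <;> simp [idx, prev, last, Fin.ext_iff] <;> omega
  have hmem : ∀ k, φ (h (idx k)) ∈ annSeq mul' 2 := by
    intro k
    refine map_mem_annSeq φ hφ ?_
    fin_cases k
    · exact hnat.basis_mem_annSeq_two hs5
        (hs2 ▸ Submodule.smul_mem _ c (Submodule.mem_span_singleton_self _))
    · exact hnat.basis_mem_annSeq_two hs5 hprev
    · exact hnat.basis_mem_annSeq_two hs5 (hs5 ▸ Submodule.zero_mem _)
  have := IsElrMul.card_le_two_of_linearIndependent hmul' hu hb hr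
    ((h.linearIndependent.comp idx hidx).map' φ.toLinearMap φ.ker) hmem
  simp at this
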